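/- (Δ-system lemma for Easton supports below a Mahlo cardinal) If λ is Mahlo and ⟨d_α : α < λ⟩ is a sequence of Easton subsets of λ each of size < λ, then there is a set Z ⊆ λ of size λ and a set r such that d_α ∩ d_β = r for all distinct α, β ∈ Z. -/

import Mathlib

/-- An inaccessible cardinal: uncountable, regular, strong limit. -/
def IsInacc (c : Cardinal) : Prop :=
  Cardinal.aleph0 < c ∧ c.IsRegular ∧ c.IsStrongLimit

/-- `C` is club in `δ`: a subset of `δ`, unbounded in `δ`, and closed: every nonzero
`a < δ` which is a limit of elements of `C` belongs to `C`. -/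
def IsClubIn (C : Set Ordinal) (δ : Ordinal) : Prop :=
  C ⊆ Set.Iio δ ∧ (∀ a < δ, ∃ b ∈ C, a < b) ∧
  ∀ a < δ, 0 < a → (∀ b < a, ∃ c ∈ C, b < c ∧ c < a) → a ∈ C

/-- A Mahlo cardinal: inaccessible, and every club in it contains an inaccessible. -/
def IsMahlo (c : Cardinal) : Prop :=
  IsInacc c ∧ ∀ C : Set Ordinal, IsClubIn C c.ord →
    ∃ r : Cardinal, IsInacc r ∧ r.ord ∈ C

/-- A set `d` of ordinals is an Easton subset of `λ`: for every regular cardinal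
`α ≤ λ`, `sup (d ∩ α) < α`. -/
def EastonO (lam : Cardinal) (d : Set Ordinal) : Prop :=
  ∀ c : Cardinal, c.IsRegular → c ≤ lam → ∃ β < c.ord, ∀ x ∈ d, x < c.ord → x ≤ β

/-!
Choose `h α < λ` bounding `d_α`. At an inaccessible `μ < λ` closed under `h`, the Easton
property of `d_μ` at the regular cardinal `μ` gives `F μ < μ` with `d_μ ∩ μ ⊆ [0, F μ]`.
Since `λ` is Mahlo these `μ` meet every club, so pressing down makes `F ≤ β` on an unbounded
set. As `2 ^ |β| < λ`, the trace `d_μ ∩ [0, β]` takes a single value `r` on an unbounded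
subset `W`. For `μ < ν` in `W` we have `d_μ ⊆ ν` and `d_ν ∩ ν ⊆ [0, β]`, so `d_μ ∩ d_ν = r`.
-/

open Cardinal Ordinal Set

universe u v

def UnboundedIn (S : Set Ordinal) (δ : Ordinal) : Prop :=
  ∀ b < δ, ∃ γ ∈ S, b ≤ γ

def closurePoints (h : Ordinal → Ordinal) (δ : Ordinal) : Set Ordinal :=
  {γ | γ < δ ∧ ∀ α < γ, h α < γ}

variable {κ : Cardinal.{u}}

theorem Cardinal.IsRegular.exists_lt_ord_subset_Iio (hκ : κ.IsRegular) {s : Set Ordinal.{u}}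
    (hs : s ⊆ Iio κ.ord) (hsz : #s < Cardinal.lift.{u + 1} κ) : ∃ b < κ.ord, s ⊆ Iio b := by
  have hsup : sSup s < κ.ord :=
    sSup_lt_of_lt_cof (by rwa [lift_ord, hκ.lift.cof_ord]) hs
  exact ⟨sSup s + 1, (isSuccLimit_ord hκ.aleph0_le).add_one_lt hsup, fun x hx =>
    Order.lt_add_one_iff.2 (le_csSup ⟨κ.ord, fun y hy => (hs hy).le⟩ hx)⟩

theorem Cardinal.IsRegular.isClubIn_closurePoints (hκ : κ.IsRegular) (hκω : ℵ₀ < κ)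
    {h : Ordinal.{u} → Ordinal.{u}} (hh : ∀ α < κ.ord, h α < κ.ord) :
    IsClubIn (closurePoints h κ.ord) κ.ord := by
  refine ⟨fun γ hγ => hγ.1, fun a ha => ?_, fun a ha _ hacc => ⟨ha, fun α hα => ?_⟩⟩
  · set f : Ordinal.{u} → Ordinal.{u} := fun o => ⨆ α : Iio o, h α + 1
    have hf_lt : ∀ o < κ.ord, f o < κ.ord := fun o ho =>
      lift_iSup_add_one_lt_of_lt_cof (by
        rw [Cardinal.mk_Iio_ordinal, Cardinal.lift_lift, lift_ord, hκ.lift.cof_ord,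
          Cardinal.lift_lt]
        exact lt_ord.1 ho) (fun α => hh α (α.2.trans ho))
    have hlt_f : ∀ o, ∀ α < o, h α < f o := fun o α hα =>
      Order.add_one_le_iff.1
        (le_ciSup (f := fun α : Iio o => h α + 1) Ordinal.bddAbove_of_small ⟨α, hα⟩)
    refine ⟨nfp f (a + 1), ⟨nfp_lt_ord (by rwa [hκ.cof_ord]) hf_lt
      ((isSuccLimit_ord hκ.aleph0_le).add_one_lt ha), fun α hα => ?_⟩,
      (lt_add_one a).trans_le (le_nfp f _)⟩
    obtain ⟨n, hn⟩ := lt_nfp_iff.1 hα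
    calc h α < f (f^[n] (a + 1)) := hlt_f _ _ hn
      _ = f^[n + 1] (a + 1) := (Function.iterate_succ_apply' f n _).symm
      _ ≤ nfp f (a + 1) := iterate_le_nfp f _ _
  · obtain ⟨c, hc, hαc, hca⟩ := hacc α hα
    exact (hc.2 α hαc).trans hca

theorem IsMahlo.exists_unboundedIn_fiber_of_regressive (hM : IsMahlo κ)
    {h F : Ordinal.{u} → Ordinal.{u}} (hh : ∀ α < κ.ord, h α < κ.ord)
    (hF : ∀ γ ∈ ord '' {r | IsInacc r} ∩ closurePoints h κ.ord, F γ < γ) :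
    ∃ β < κ.ord,
      UnboundedIn {γ ∈ ord '' {r | IsInacc r} ∩ closurePoints h κ.ord | F γ ≤ β} κ.ord := by
  by_contra! hbdd
  simp only [UnboundedIn, not_forall, not_exists, not_and, not_le, exists_prop] at hbdd
  choose! b hb_lt hb using hbdd
  obtain ⟨r, hr, hrκ, hr_cl⟩ := hM.2 _ (hM.1.2.1.isClubIn_closurePoints hM.1.1
    (h := fun α => max (h α) (b α)) fun α hα => max_lt (hh α hα) (hb_lt α hα))
  have hrS : r.ord ∈ ord '' {r | IsInacc r} ∩ closurePoints h κ.ord :=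
    ⟨⟨r, hr, rfl⟩, hrκ, fun α hα => (le_max_left _ _).trans_lt (hr_cl α hα)⟩
  have hFr := hF _ hrS
  exact (hb _ (hFr.trans hrκ) _ ⟨hrS, le_rfl⟩).trans_le (le_max_right _ _) |>.trans
    (hr_cl _ hFr) |>.false

theorem Cardinal.IsRegular.exists_unboundedIn_fiber (hκ : κ.IsRegular) {S : Set Ordinal.{u}}
    (hS : UnboundedIn S κ.ord) {ι : Type v} (f : Ordinal.{u} → ι)
    (hι : Cardinal.lift.{u} #ι < Cardinal.lift.{v} κ) :
    ∃ i, UnboundedIn {γ ∈ S | f γ = i} κ.ord := by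
  by_contra! hbdd
  simp only [UnboundedIn, not_forall, not_exists, not_and, not_le, exists_prop] at hbdd
  choose b hb_lt hb using hbdd
  have hsup : ⨆ i, b i < κ.ord :=
    lift_iSup_lt_of_lt_cof (by rwa [lift_ord, hκ.lift.cof_ord]) hb_lt
  obtain ⟨γ, hγS, hγ⟩ := hS _ hsup
  exact (hb _ γ ⟨hγS, rfl⟩).trans_le
    (le_ciSup ⟨κ.ord, forall_mem_range.2 fun i => (hb_lt i).le⟩ (f γ)) |>.trans_le hγ |>.false

theorem Cardinal.IsStrongLimit.lift_mk_set_Iic_lt (hκ : κ.IsStrongLimit) {β : Ordinal.{u}}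
    (hβ : β < κ.ord) :
    lift.{u} #(Set (Iic β)) < lift.{u + 1} κ := by
  rw [mk_set, ← Order.Iio_succ, Cardinal.mk_Iio_ordinal, ← lift_two_power, Cardinal.lift_lift,
    Cardinal.lift_lt]
  exact hκ.isStrongPrelimit (lt_ord.1 ((isSuccLimit_ord hκ.aleph0_le).succ_lt hβ))

theorem inter_eq_of_inter_Iic_eq {α : Type*} [Preorder α] {A B r : Set α} {δ β : α}
    (hA : A ⊆ Iio δ) (hB : B ∩ Iio δ ⊆ Iic β) (hAr : A ∩ Iic β = r) (hBr : B ∩ Iic β = r) :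
    A ∩ B = r := by
  ext x
  refine ⟨fun ⟨hxA, hxB⟩ => hAr ▸ ⟨hxA, hB ⟨hxB, hA hxA⟩⟩, fun hx => ?_⟩
  exact ⟨(hAr.symm ▸ hx : x ∈ A ∩ Iic β).1, (hBr.symm ▸ hx : x ∈ B ∩ Iic β).1⟩

theorem IsMahlo.exists_unboundedIn_deltaSystem (hM : IsMahlo κ)
    {D : Ordinal.{u} → Set Ordinal.{u}} (hsub : ∀ γ < κ.ord, D γ ⊆ Iio κ.ord)
    (hsize : ∀ γ < κ.ord, #(D γ) < lift.{u + 1} κ) (hE : ∀ γ < κ.ord, EastonO κ (D γ)) :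
    ∃ W ⊆ Iio κ.ord, UnboundedIn W κ.ord ∧
      ∃ r, ∀ γ ∈ W, ∀ δ ∈ W, γ ≠ δ → D γ ∩ D δ = r := by
  choose! h hh_lt hh using
    fun γ hγ => hM.1.2.1.exists_lt_ord_subset_Iio (hsub γ hγ) (hsize γ hγ)
  set S := ord '' {r | IsInacc r} ∩ closurePoints h κ.ord
  have hEaston : ∀ γ ∈ S, ∃ β < γ, D γ ∩ Iio γ ⊆ Iic β := by
    rintro _ ⟨⟨r, hr, rfl⟩, hrκ, -⟩
    obtain ⟨β, hβ, hβD⟩ := hE _ hrκ r hr.2.1 (ord_lt_ord.1 hrκ).le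
    exact ⟨β, hβ, fun x hx => hβD x hx.1 hx.2⟩
  choose! F hF_lt hF using hEaston
  obtain ⟨β, hβ, hfiber⟩ := hM.exists_unboundedIn_fiber_of_regressive hh_lt hF_lt
  obtain ⟨s, hs⟩ := hM.1.2.1.exists_unboundedIn_fiber hfiber
    (fun γ => (Subtype.val ⁻¹' D γ : Set (Iic β))) (hM.1.2.2.lift_mk_set_Iic_lt hβ)
  set W := {γ ∈ {γ ∈ S | F γ ≤ β} | (Subtype.val ⁻¹' D γ : Set (Iic β)) = s}
  have hroot : ∀ γ ∈ W, D γ ∩ Iic β = Subtype.val '' s := by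
    rintro γ ⟨-, rfl⟩
    rw [Subtype.image_preimage_coe, inter_comm]
  have hinter : ∀ γ ∈ W, ∀ δ ∈ W, γ < δ → D γ ∩ D δ = Subtype.val '' s := by
    intro γ hγ δ hδ hγδ
    exact inter_eq_of_inter_Iic_eq
      ((hh γ hγ.1.1.2.1).trans (Iio_subset_Iio (hδ.1.1.2.2 γ hγδ).le))
      ((hF δ hδ.1.1).trans (Iic_subset_Iic.2 hδ.1.2)) (hroot γ hγ) (hroot δ hδ)
  refine ⟨W, fun γ hγ => hγ.1.1.2.1, hs, Subtype.val '' s, fun γ hγ δ hδ hγδ => ?_⟩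
  rcases hγδ.lt_or_gt with hlt | hlt
  · exact hinter γ hγ δ hδ hlt
  · rw [inter_comm]; exact hinter δ hδ γ hγ hlt

theorem Cardinal.IsRegular.mk_eq_of_isCofinal (hκ : κ.IsRegular) {Z : Set κ.ord.ToType}
    (hZ : IsCofinal Z) : #Z = κ :=
  le_antisymm ((mk_set_le Z).trans_eq (by rw [mk_toType, card_ord]))
    (by simpa only [cof_toType, hκ.cof_ord] using Order.cof_le hZ)

theorem isCofinal_setOf_toOrd_mem {o : Ordinal} {W : Set Ordinal} (hWsub : W ⊆ Iio o)
    (hW : UnboundedIn W o) : IsCofinal {x : o.ToType | (x.toOrd : Ordinal) ∈ W} := by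
  intro a
  obtain ⟨γ, hγW, hγ⟩ := hW _ (mem_Iio.1 a.toOrd.2)
  refine ⟨ToType.mk ⟨γ, hWsub hγW⟩, by simpa using hγW, ?_⟩
  rw [← ToType.mk.symm.le_iff_le, OrderIso.symm_apply_apply]
  exact hγ

/-- Δ-system lemma for Easton supports below a Mahlo cardinal: if `λ` is Mahlo and
`⟨d_α : α < λ⟩` is a sequence of Easton subsets of `λ` each of size `< λ`, there are
`Z ⊆ λ` of size `λ` and a root `r` with `d_α ∩ d_β = r` for all distinct `α, β ∈ Z`. -/
theorem stmt13 (lam : Cardinal.{0}) (hM : IsMahlo lam)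
    (d : lam.ord.ToType → Set Ordinal)
    (hsub : ∀ α, d α ⊆ Set.Iio lam.ord)
    (hsize : ∀ α, Cardinal.mk (d α) < Cardinal.lift.{1} lam)
    (hE : ∀ α, EastonO lam (d α)) :
    ∃ Z : Set lam.ord.ToType, Cardinal.mk Z = lam ∧
      ∃ r : Set Ordinal, ∀ a ∈ Z, ∀ b ∈ Z, a ≠ b → d a ∩ d b = r := by
  set D : Ordinal → Set Ordinal := fun γ => if hγ : γ < lam.ord then d (ToType.mk ⟨γ, hγ⟩) else ∅
  have hD : ∀ γ (hγ : γ < lam.ord), D γ = d (ToType.mk ⟨γ, hγ⟩) := fun γ hγ => dif_pos hγ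
  obtain ⟨W, hWsub, hW, r, hr⟩ := hM.exists_unboundedIn_deltaSystem (D := D)
    (fun γ hγ => hD γ hγ ▸ hsub _) (fun γ hγ => hD γ hγ ▸ hsize _) (fun γ hγ => hD γ hγ ▸ hE _)
  refine ⟨_, hM.1.2.1.mk_eq_of_isCofinal (isCofinal_setOf_toOrd_mem hWsub hW), r,
    fun a ha b hb hab => ?_⟩
  have hDd : ∀ x : lam.ord.ToType, D x.toOrd = d x := fun x => by simp [hD x.toOrd x.toOrd.2]
  rw [← hDd a, ← hDd b]
  exact hr _ ha _ hb (Subtype.coe_injective.ne (ToType.mk.symm.injective.ne hab))
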